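/- Define ψ_K as in the HARQ-IR analysis. Then for all γ > 0 and any Δ with 0 < Δ ≤ c: (ᾱP₁/c)·e^{-1/(ᾱP₁)}·ψ_{K-1}(γ/(1+c)) ≤ ψ_K(γ) ≤ e^{-1/(ᾱP₁)}·( ((c-Δ)/(cΔ))·ψ_{K-1}(γ) + (ᾱP₁/c)·ψ_{K-1}(γ/(1+c-Δ)) ). -/

import Mathlib

open MeasureTheory

noncomputable def psi (c abar P₁ : ℝ) (K : ℕ) (γ : ℝ) : ℝ :=
  ∫ z in Set.univ.pi (fun _ : Fin K => Set.Icc (0:ℝ) c),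
    (if ∏ k, (1 + c - z k) ≤ γ then (1:ℝ) else 0) *
      Real.exp (-(c / (abar * P₁)) * ∑ k, (z k)⁻¹) * (∏ k, (z k) ^ 2)⁻¹

open Set Real

namespace Psi15

noncomputable def phi (a t : ℝ) : ℝ := Real.exp (-a * t⁻¹) * (t ^ 2)⁻¹

lemma phi_nonneg (a t : ℝ) : 0 ≤ phi a t :=
  mul_nonneg (exp_nonneg _) (inv_nonneg.2 (sq_nonneg _))

lemma phi_le {a : ℝ} (ha : 0 < a) {t : ℝ} (ht : 0 ≤ t) : phi a t ≤ 4 / a ^ 2 := by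
  rcases ht.eq_or_lt with rfl | ht
  · simp only [phi, inv_zero, mul_zero, Real.exp_zero, ne_eq, OfNat.ofNat_ne_zero,
      not_false_eq_true, zero_pow, one_mul]
    positivity
  · have hx : 0 < a * t⁻¹ := by positivity
    have h1 : (a * t⁻¹) ^ 2 / 4 ≤ Real.exp (a * t⁻¹) := by
      have := Real.add_one_le_exp (a * t⁻¹ / 2)
      have h2 : Real.exp (a * t⁻¹ / 2) ^ 2 = Real.exp (a * t⁻¹) := by
        rw [← Real.exp_nat_mul]; ring_nf
      nlinarith [Real.exp_pos (a * t⁻¹ / 2)]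
    have h3 : Real.exp (-(a * t⁻¹)) ≤ 4 / (a * t⁻¹) ^ 2 := by
      rw [Real.exp_neg, div_eq_mul_inv]
      calc (Real.exp (a * t⁻¹))⁻¹ ≤ ((a * t⁻¹) ^ 2 / 4)⁻¹ :=
            inv_anti₀ (by positivity) h1
        _ = 4 * ((a * t⁻¹) ^ 2)⁻¹ := by rw [inv_div]; ring
    have h4 := mul_le_mul_of_nonneg_right h3 (inv_nonneg.2 (sq_nonneg t))
    calc phi a t ≤ 4 / (a * t⁻¹) ^ 2 * (t ^ 2)⁻¹ := by
          simpa [phi, neg_mul] using h4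
      _ = 4 / a ^ 2 := by field_simp

lemma integral_exp_neg_mul_Ioi {a b : ℝ} (ha : 0 < a) :
    ∫ x in Ioi b, Real.exp (-a * x) = a⁻¹ * Real.exp (-a * b) := by
  have hderiv : ∀ x ∈ Ici b, HasDerivAt (fun y => -a⁻¹ * Real.exp (-a * y))
      (Real.exp (-a * x)) x := by
    intro x _
    have h := ((Real.hasDerivAt_exp (-a * x)).comp x ((hasDerivAt_id x).const_mul (-a)))
    have h2 := h.const_mul (-a⁻¹)
    refine h2.congr_deriv ?_
    field_simp
  have hint : IntegrableOn (fun x => Real.exp (-a * x)) (Ioi b) := exp_neg_integrableOn_Ioi b ha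
  have htend : Filter.Tendsto (fun y => -a⁻¹ * Real.exp (-a * y)) Filter.atTop (nhds 0) := by
    have h1 : Filter.Tendsto (fun y : ℝ => -a * y) Filter.atTop Filter.atBot :=
      Filter.tendsto_id.const_mul_atTop_of_neg (by linarith)
    have := Real.tendsto_exp_atBot.comp h1
    simpa using this.const_mul (-a⁻¹)
  have := integral_Ioi_of_hasDerivAt_of_tendsto' hderiv hint htend
  rw [this]; ring

lemma integral_phi {a : ℝ} (ha : 0 < a) {s : ℝ} (hs : 0 < s) :
    ∫ t in Icc (0:ℝ) s, phi a t = a⁻¹ * Real.exp (-a * s⁻¹) := by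
  rw [integral_Icc_eq_integral_Ioc]
  have himg : Ioc (0:ℝ) s = (fun u : ℝ => u⁻¹) '' (Ici s⁻¹) := by
    ext t
    constructor
    · rintro ⟨ht0, hts⟩
      exact ⟨t⁻¹, by rwa [mem_Ici, inv_le_inv₀ (by positivity) ht0], inv_inv t⟩
    · rintro ⟨u, hu, rfl⟩
      have hu0 : 0 < u := lt_of_lt_of_le (by positivity) hu
      have : u⁻¹ ≤ s⁻¹⁻¹ := inv_anti₀ (by positivity) hu
      rw [inv_inv] at this
      exact ⟨by positivity, this⟩
  rw [himg]
  have hderiv : ∀ x ∈ Ici s⁻¹, HasDerivWithinAt (fun u : ℝ => u⁻¹) (-(x ^ 2)⁻¹) (Ici s⁻¹) x :=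
    fun x hx => (hasDerivAt_inv (ne_of_gt (lt_of_lt_of_le (by positivity) hx))).hasDerivWithinAt
  rw [integral_image_eq_integral_abs_deriv_smul measurableSet_Ici hderiv
    (inv_injective.injOn) (phi a)]
  have : ∀ x ∈ Ici s⁻¹, |(-(x ^ 2)⁻¹)| • phi a x⁻¹ = Real.exp (-a * x) := by
    intro x hx
    have hx0 : 0 < x := lt_of_lt_of_le (by positivity) hx
    rw [abs_neg, abs_of_nonneg (inv_nonneg.2 (sq_nonneg _)), smul_eq_mul]
    simp only [phi, inv_inv]
    rw [inv_pow, inv_inv]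
    field_simp
  rw [setIntegral_congr_fun measurableSet_Ici this, integral_Ici_eq_integral_Ioi,
    integral_exp_neg_mul_Ioi ha]

lemma integral_inv_sq_Ioc {d c : ℝ} (hd : 0 < d) (hdc : d ≤ c) :
    ∫ t in Ioc d c, (t ^ 2)⁻¹ = d⁻¹ - c⁻¹ := by
  rw [← intervalIntegral.integral_of_le hdc]
  have hderiv : ∀ x ∈ uIcc d c, HasDerivAt (fun t : ℝ => -t⁻¹) ((x ^ 2)⁻¹) x := by
    intro x hx
    rw [uIcc_of_le hdc] at hx
    have hx0 : x ≠ 0 := ne_of_gt (lt_of_lt_of_le hd hx.1)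
    have h := (hasDerivAt_inv hx0).neg
    simp only [neg_neg] at h
    exact h
  have hcont : IntervalIntegrable (fun t : ℝ => (t ^ 2)⁻¹) volume d c := by
    apply ContinuousOn.intervalIntegrable
    apply ContinuousOn.inv₀ (continuousOn_pow 2)
    intro x hx
    rw [uIcc_of_le hdc] at hx
    exact pow_ne_zero _ (ne_of_gt (lt_of_lt_of_le hd hx.1))
  rw [intervalIntegral.integral_eq_sub_of_hasDerivAt hderiv hcont]
  ring

noncomputable def gg (c a γ : ℝ) (m : ℕ) (z : Fin m → ℝ) : ℝ :=
  (if ∏ k, (1 + c - z k) ≤ γ then (1:ℝ) else 0) *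
    Real.exp (-a * ∑ k, (z k)⁻¹) * (∏ k, (z k) ^ 2)⁻¹

def Box (c : ℝ) (m : ℕ) : Set (Fin m → ℝ) := Set.univ.pi (fun _ : Fin m => Set.Icc (0:ℝ) c)

lemma psi_eq (c abar P₁ : ℝ) (m : ℕ) (γ : ℝ) :
    psi c abar P₁ m γ = ∫ z in Box c m, gg c (c / (abar * P₁)) γ m z := rfl

lemma measurableSet_Box (c : ℝ) (m : ℕ) : MeasurableSet (Box c m) :=
  MeasurableSet.univ_pi fun _ => measurableSet_Icc

lemma measurable_gg (c a γ : ℝ) (m : ℕ) : Measurable (gg c a γ m) := by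
  apply Measurable.mul
  · apply Measurable.mul
    · apply Measurable.ite _ measurable_const measurable_const
      exact measurableSet_le (Finset.measurable_prod _ fun k _ =>
        measurable_const.sub (measurable_pi_apply k)) measurable_const
    · exact (Real.measurable_exp).comp
        ((Finset.measurable_sum _ fun k _ => (measurable_pi_apply k).inv).const_mul (-a))
  · exact (Finset.measurable_prod _ fun k _ => (measurable_pi_apply k).pow_const 2).inv

lemma gg_nonneg (c a γ : ℝ) (m : ℕ) (z : Fin m → ℝ) : 0 ≤ gg c a γ m z := by
  apply mul_nonneg (mul_nonneg _ (exp_nonneg _))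
    (inv_nonneg.2 (Finset.prod_nonneg fun k _ => sq_nonneg _))
  split <;> norm_num

lemma gg_eq_prod (c a γ : ℝ) (m : ℕ) (z : Fin m → ℝ) :
    gg c a γ m z = (if ∏ k, (1 + c - z k) ≤ γ then (1:ℝ) else 0) * ∏ k, phi a (z k) := by
  unfold gg phi
  rw [Finset.mul_sum, Real.exp_sum, ← Finset.prod_inv_distrib, mul_assoc,
    ← Finset.prod_mul_distrib]

lemma gg_le {c a γ : ℝ} (ha : 0 < a) (m : ℕ) {z : Fin m → ℝ} (hz : z ∈ Box c m) :
    gg c a γ m z ≤ (4 / a ^ 2) ^ m := by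
  rw [gg_eq_prod]
  calc (if ∏ k, (1 + c - z k) ≤ γ then (1:ℝ) else 0) * ∏ k, phi a (z k)
      ≤ 1 * ∏ k, phi a (z k) := by
        apply mul_le_mul_of_nonneg_right _ (Finset.prod_nonneg fun k _ => phi_nonneg a _)
        split <;> norm_num
    _ = ∏ k, phi a (z k) := one_mul _
    _ ≤ ∏ _k : Fin m, (4 / a ^ 2) := by
        apply Finset.prod_le_prod (fun k _ => phi_nonneg a _)
        exact fun k _ => phi_le ha (hz k (Set.mem_univ k)).1
    _ = (4 / a ^ 2) ^ m := by rw [Finset.prod_const, Finset.card_univ, Fintype.card_fin]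

lemma integrableOn_gg {c a : ℝ} (ha : 0 < a) (γ : ℝ) (m : ℕ) :
    IntegrableOn (gg c a γ m) (Box c m) := by
  have hcpt : IsCompact (Box c m) := isCompact_univ_pi fun _ => isCompact_Icc
  refine Integrable.mono' (g := fun _ => (4 / a ^ 2) ^ m)
    (integrableOn_const hcpt.measure_lt_top.ne)
    (measurable_gg c a γ m).aestronglyMeasurable ?_
  filter_upwards [self_mem_ae_restrict (measurableSet_Box c m)] with z hz
  rw [Real.norm_eq_abs, abs_of_nonneg (gg_nonneg c a γ m z)]
  exact gg_le ha m hz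

lemma S_mono {c a : ℝ} (ha : 0 < a) (m : ℕ) {γ₁ γ₂ : ℝ} (h : γ₁ ≤ γ₂) :
    ∫ z in Box c m, gg c a γ₁ m z ≤ ∫ z in Box c m, gg c a γ₂ m z := by
  apply setIntegral_mono_on (integrableOn_gg ha γ₁ m) (integrableOn_gg ha γ₂ m)
    (measurableSet_Box c m)
  intro z _
  unfold gg
  apply mul_le_mul_of_nonneg_right (mul_le_mul_of_nonneg_right _ (exp_nonneg _))
    (inv_nonneg.2 (Finset.prod_nonneg fun k _ => sq_nonneg _))
  split_ifs with h1 h2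
  · exact le_rfl
  · exact absurd (h1.trans h) h2
  all_goals norm_num

lemma S_nonneg (c a γ : ℝ) (m : ℕ) : 0 ≤ ∫ z in Box c m, gg c a γ m z :=
  setIntegral_nonneg (measurableSet_Box c m) fun z _ => gg_nonneg c a γ m z

lemma step {c a : ℝ} (hc : 0 < c) (ha : 0 < a) (n : ℕ) (γ : ℝ) :
    (∫ z in Box c (n + 1), gg c a γ (n + 1) z
      = ∫ t in Icc (0:ℝ) c, phi a t * ∫ z in Box c n, gg c a (γ / (1 + c - t)) n z)
    ∧ IntegrableOn
        (fun t => phi a t * ∫ z in Box c n, gg c a (γ / (1 + c - t)) n z) (Icc (0:ℝ) c) := by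
  have hmeas := measurableSet_Box c (n+1)
  set F : (Fin (n+1) → ℝ) → ℝ := (Box c (n+1)).indicator (gg c a γ (n+1)) with hF
  have hIntF : Integrable F := (integrable_indicator_iff hmeas).2 (integrableOn_gg ha γ (n+1))
  have mp := ((measurePreserving_piFinSuccAbove
    (fun _ : Fin (n+1) => (volume : Measure ℝ)) 0).symm)
  rw [volume_pi] at hIntF
  have hIntF2 := (mp.integrable_comp_emb (MeasurableEquiv.measurableEmbedding _)).2 hIntF
  have hIntF2' : Integrable
      (fun p : ℝ × (Fin n → ℝ) =>
        F ((MeasurableEquiv.piFinSuccAbove (fun _ : Fin (n+1) => ℝ) 0).symm p))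
      ((volume : Measure ℝ).prod (Measure.pi fun _ : Fin n => (volume : Measure ℝ))) := hIntF2
  have hsymm : ∀ p : ℝ × (Fin n → ℝ),
      (MeasurableEquiv.piFinSuccAbove (fun _ : Fin (n+1) => ℝ) 0).symm p = Fin.cons p.1 p.2 := by
    intro p
    simp [MeasurableEquiv.piFinSuccAbove_symm_apply, Fin.insertNthEquiv, Fin.insertNth_zero]
  have hinner : ∀ t : ℝ,
      (∫ y, F (Fin.cons t y) ∂(Measure.pi fun _ : Fin n => (volume : Measure ℝ)))
        = (Icc (0:ℝ) c).indicator
            (fun t => phi a t * ∫ z in Box c n, gg c a (γ / (1 + c - t)) n z) t := by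
    intro t
    by_cases ht : t ∈ Icc (0:ℝ) c
    · rw [Set.indicator_of_mem ht]
      have h1ct : 0 < 1 + c - t := by
        have := ht.2; simp only [mem_Icc] at ht; linarith
      have hcons : ∀ y : Fin n → ℝ, F (Fin.cons t y)
          = (Box c n).indicator (fun y => phi a t * gg c a (γ / (1 + c - t)) n y) y := by
        intro y
        by_cases hy : y ∈ Box c n
        · rw [Set.indicator_of_mem hy]
          have hmem : Fin.cons t y ∈ Box c (n+1) := by
            intro i _
            refine Fin.cases ?_ ?_ i
            · simpa using ht
            · intro j; simpa using hy j (Set.mem_univ j)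
          rw [hF, Set.indicator_of_mem hmem]
          unfold gg phi
          rw [Fin.prod_univ_succ, Fin.sum_univ_succ, Fin.prod_univ_succ]
          simp only [Fin.cons_zero, Fin.cons_succ]
          have hcond : ((1 + c - t) * ∏ k : Fin n, (1 + c - y k) ≤ γ)
              ↔ (∏ k : Fin n, (1 + c - y k) ≤ γ / (1 + c - t)) := by
            rw [le_div_iff₀ h1ct, mul_comm]
          rw [if_congr hcond rfl rfl, mul_add, Real.exp_add, mul_inv]
          ring
        · rw [Set.indicator_of_notMem hy, hF, Set.indicator_of_notMem]
          intro hmem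
          exact hy (fun j _ => by simpa using hmem (Fin.succ j) (Set.mem_univ _))
      calc (∫ y, F (Fin.cons t y) ∂(Measure.pi fun _ : Fin n => (volume : Measure ℝ)))
          = ∫ y, (Box c n).indicator (fun y => phi a t * gg c a (γ / (1 + c - t)) n y) y
              ∂(Measure.pi fun _ : Fin n => (volume : Measure ℝ)) :=
            integral_congr_ae (Filter.Eventually.of_forall hcons)
        _ = ∫ y in Box c n, phi a t * gg c a (γ / (1 + c - t)) n y := by
            rw [← volume_pi, integral_indicator (measurableSet_Box c n)]
        _ = phi a t * ∫ z in Box c n, gg c a (γ / (1 + c - t)) n z := integral_const_mul _ _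
    · rw [Set.indicator_of_notMem ht]
      have hzero : ∀ y : Fin n → ℝ, F (Fin.cons t y) = 0 := by
        intro y
        rw [hF, Set.indicator_of_notMem]
        intro hmem
        exact ht (by simpa using hmem 0 (Set.mem_univ _))
      simp [hzero]
  constructor
  · rw [← integral_indicator hmeas]
    rw [volume_pi, ← mp.integral_comp']
    rw [MeasureTheory.integral_prod _ hIntF2']
    simp_rw [hsymm]
    simp_rw [hinner]
    rw [integral_indicator measurableSet_Icc]
  · have hI := hIntF2'.integral_prod_left
    simp_rw [hsymm] at hI
    simp_rw [hinner] at hI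
    exact (integrable_indicator_iff measurableSet_Icc).1 hI

lemma measurable_phi (a : ℝ) : Measurable (phi a) :=
  (Real.measurable_exp.comp (measurable_inv.const_mul (-a))).mul
    ((measurable_id.pow_const 2).inv)

lemma integrableOn_phi {a : ℝ} (ha : 0 < a) {u v : ℝ} (hu : 0 ≤ u) :
    IntegrableOn (phi a) (Icc u v) := by
  refine Integrable.mono' (g := fun _ => 4 / a ^ 2)
    (integrableOn_const measure_Icc_lt_top.ne)
    (measurable_phi a).aestronglyMeasurable ?_
  filter_upwards [self_mem_ae_restrict measurableSet_Icc] with t htm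
  rw [Real.norm_eq_abs, abs_of_nonneg (phi_nonneg a t)]
  exact phi_le ha (hu.trans htm.1)

end Psi15

open Psi15

theorem stmt_15 (c abar P₁ γ Δ : ℝ) (K : ℕ) (hc : 0 < c) (habar : 0 < abar) (hP₁ : 0 < P₁)
    (hK : 2 ≤ K) (hγ : 0 < γ) (hΔ0 : 0 < Δ) (hΔc : Δ ≤ c) :
    (abar * P₁ / c) * Real.exp (-1 / (abar * P₁)) * psi c abar P₁ (K - 1) (γ / (1 + c)) ≤
        psi c abar P₁ K γ ∧
    psi c abar P₁ K γ ≤ Real.exp (-1 / (abar * P₁)) *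
        ((c - Δ) / (c * Δ) * psi c abar P₁ (K - 1) γ +
          (abar * P₁ / c) * psi c abar P₁ (K - 1) (γ / (1 + c - Δ))) := by
  obtain ⟨m, rfl⟩ : ∃ m, K = m + 1 := ⟨K - 1, by omega⟩
  simp only [Nat.add_sub_cancel]
  set a : ℝ := c / (abar * P₁) with ha
  have ha0 : 0 < a := div_pos hc (mul_pos habar hP₁)
  have hstep := step hc ha0 m γ
  -- notation
  set S : ℝ → ℝ := fun γ' => ∫ z in Box c m, gg c a γ' m z with hS
  have hSnn : ∀ γ', 0 ≤ S γ' := fun γ' => S_nonneg c a γ' m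
  have hSm : ∀ {γ₁ γ₂ : ℝ}, γ₁ ≤ γ₂ → S γ₁ ≤ S γ₂ := fun h => S_mono ha0 m h
  have hpsiS : ∀ γ', psi c abar P₁ m γ' = S γ' := fun γ' => psi_eq c abar P₁ m γ'
  have hpsitop : psi c abar P₁ (m + 1) γ
      = ∫ t in Icc (0:ℝ) c, phi a t * S (γ / (1 + c - t)) := by
    rw [psi_eq, ← ha, hstep.1]
  have hEc : -a * c⁻¹ = -1 / (abar * P₁) := by
    rw [ha]; field_simp
  constructor
  · -- lower bound
    rw [hpsitop, hpsiS]
    have hmono : ∫ t in Icc (0:ℝ) c, phi a t * S (γ / (1 + c))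
        ≤ ∫ t in Icc (0:ℝ) c, phi a t * S (γ / (1 + c - t)) := by
      apply setIntegral_mono_on ((integrableOn_phi ha0 le_rfl).mul_const _) hstep.2
        measurableSet_Icc
      intro t htm
      apply mul_le_mul_of_nonneg_left _ (phi_nonneg a t)
      apply hSm
      apply div_le_div_of_nonneg_left hγ.le (by simp only [mem_Icc] at htm; linarith)
      simp only [mem_Icc] at htm; linarith
    refine le_trans (le_of_eq ?_) hmono
    rw [integral_mul_const, integral_phi ha0 hc, hEc]
    have hainv : a⁻¹ = abar * P₁ / c := by rw [ha, inv_div]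
    rw [hainv]
  · -- upper bound
    rw [hpsitop, hpsiS, hpsiS]
    have h1cΔ : (0:ℝ) < 1 + c - Δ := by linarith
    set G : ℝ → ℝ := fun t =>
      if t ≤ Δ then phi a t * S (γ / (1 + c - Δ))
      else Real.exp (-a * c⁻¹) * (t ^ 2)⁻¹ * S γ with hG
    have hGmeas : Measurable G := by
      apply Measurable.ite
      · exact measurableSet_Iic
      · exact (measurable_phi a).mul_const _
      · exact ((measurable_const.mul ((measurable_id.pow_const 2).inv)).mul_const _)
    have hGnn : ∀ t, 0 ≤ G t := by
      intro t
      simp only [hG]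
      split_ifs
      · exact mul_nonneg (phi_nonneg a t) (hSnn _)
      · exact mul_nonneg (mul_nonneg (exp_nonneg _) (inv_nonneg.2 (sq_nonneg _))) (hSnn _)
    have hIntG : IntegrableOn G (Icc (0:ℝ) c) := by
      refine Integrable.mono'
        (g := fun _ => 4 / a ^ 2 * S (γ / (1 + c - Δ)) + Real.exp (-a * c⁻¹) * (Δ ^ 2)⁻¹ * S γ)
        (integrableOn_const measure_Icc_lt_top.ne)
        hGmeas.aestronglyMeasurable ?_
      filter_upwards [self_mem_ae_restrict measurableSet_Icc] with t htm
      rw [Real.norm_eq_abs, abs_of_nonneg (hGnn t)]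
      simp only [hG]
      simp only [mem_Icc] at htm
      split_ifs with htΔ
      · have h1 : phi a t * S (γ / (1 + c - Δ)) ≤ 4 / a ^ 2 * S (γ / (1 + c - Δ)) :=
          mul_le_mul_of_nonneg_right (phi_le ha0 htm.1) (hSnn _)
        have h2 : 0 ≤ Real.exp (-a * c⁻¹) * (Δ ^ 2)⁻¹ * S γ :=
          mul_nonneg (mul_nonneg (exp_nonneg _) (inv_nonneg.2 (sq_nonneg _))) (hSnn _)
        linarith
      · have htΔ' : Δ < t := not_le.1 htΔ
        have h1 : (t ^ 2)⁻¹ ≤ (Δ ^ 2)⁻¹ := by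
          apply inv_anti₀ (by positivity)
          nlinarith
        have h2 : Real.exp (-a * c⁻¹) * (t ^ 2)⁻¹ * S γ
            ≤ Real.exp (-a * c⁻¹) * (Δ ^ 2)⁻¹ * S γ :=
          mul_le_mul_of_nonneg_right (mul_le_mul_of_nonneg_left h1 (exp_nonneg _)) (hSnn _)
        have h3 : 0 ≤ 4 / a ^ 2 * S (γ / (1 + c - Δ)) := by
          apply mul_nonneg _ (hSnn _); positivity
        linarith
    have hup : ∫ t in Icc (0:ℝ) c, phi a t * S (γ / (1 + c - t))
        ≤ ∫ t in Icc (0:ℝ) c, G t := by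
      apply setIntegral_mono_on hstep.2 hIntG measurableSet_Icc
      intro t htm
      simp only [mem_Icc] at htm
      simp only [hG]
      split_ifs with htΔ
      · apply mul_le_mul_of_nonneg_left _ (phi_nonneg a t)
        apply hSm
        apply div_le_div_of_nonneg_left hγ.le h1cΔ
        linarith
      · have htΔ' : Δ < t := not_le.1 htΔ
        have hphile : phi a t ≤ Real.exp (-a * c⁻¹) * (t ^ 2)⁻¹ := by
          apply mul_le_mul_of_nonneg_right _ (inv_nonneg.2 (sq_nonneg _))
          apply Real.exp_le_exp.2
          have hinv : c⁻¹ ≤ t⁻¹ := inv_anti₀ (lt_of_lt_of_le hΔ0 htΔ'.le) htm.2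
          nlinarith
        calc phi a t * S (γ / (1 + c - t)) ≤ phi a t * S γ := by
              apply mul_le_mul_of_nonneg_left _ (phi_nonneg a t)
              apply hSm
              apply div_le_self hγ.le
              linarith
          _ ≤ Real.exp (-a * c⁻¹) * (t ^ 2)⁻¹ * S γ :=
              mul_le_mul_of_nonneg_right hphile (hSnn _)
    -- split the integral of G
    have hsplit : ∫ t in Icc (0:ℝ) c, G t
        = (∫ t in Icc (0:ℝ) Δ, G t) + ∫ t in Ioc Δ c, G t := by
      rw [← Icc_union_Ioc_eq_Icc hΔ0.le hΔc]
      apply setIntegral_union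
      · rw [Set.disjoint_left]
        rintro x ⟨_, h1⟩ ⟨h2, _⟩
        exact absurd h1 (not_le.2 h2)
      · exact measurableSet_Ioc
      · apply hIntG.mono_set
        rw [← Icc_union_Ioc_eq_Icc hΔ0.le hΔc]; exact subset_union_left
      · apply hIntG.mono_set
        rw [← Icc_union_Ioc_eq_Icc hΔ0.le hΔc]; exact subset_union_right
    have hpiece1 : ∫ t in Icc (0:ℝ) Δ, G t
        = a⁻¹ * Real.exp (-a * Δ⁻¹) * S (γ / (1 + c - Δ)) := by
      have : ∀ t ∈ Icc (0:ℝ) Δ, G t = phi a t * S (γ / (1 + c - Δ)) := by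
        intro t htm
        simp only [hG]
        exact if_pos htm.2
      rw [setIntegral_congr_fun measurableSet_Icc this, integral_mul_const,
        integral_phi ha0 hΔ0]
    have hpiece2 : ∫ t in Ioc Δ c, G t
        = Real.exp (-a * c⁻¹) * (Δ⁻¹ - c⁻¹) * S γ := by
      have : ∀ t ∈ Ioc Δ c, G t = Real.exp (-a * c⁻¹) * (t ^ 2)⁻¹ * S γ := by
        intro t htm
        simp only [hG]
        exact if_neg (not_le.2 htm.1)
      rw [setIntegral_congr_fun measurableSet_Ioc this]
      simp_rw [mul_assoc]
      rw [integral_const_mul, integral_mul_const, integral_inv_sq_Ioc hΔ0 hΔc]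
    have hexpΔ : Real.exp (-a * Δ⁻¹) ≤ Real.exp (-a * c⁻¹) := by
      apply Real.exp_le_exp.2
      have hinv : c⁻¹ ≤ Δ⁻¹ := inv_anti₀ hΔ0 hΔc
      nlinarith
    have hfinal : (∫ t in Icc (0:ℝ) Δ, G t) + (∫ t in Ioc Δ c, G t)
        ≤ Real.exp (-1 / (abar * P₁)) *
          ((c - Δ) / (c * Δ) * S γ + abar * P₁ / c * S (γ / (1 + c - Δ))) := by
      rw [hpiece1, hpiece2]
      have h1 : a⁻¹ * Real.exp (-a * Δ⁻¹) * S (γ / (1 + c - Δ))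
          ≤ a⁻¹ * Real.exp (-a * c⁻¹) * S (γ / (1 + c - Δ)) := by
        apply mul_le_mul_of_nonneg_right _ (hSnn _)
        exact mul_le_mul_of_nonneg_left hexpΔ (inv_nonneg.2 ha0.le)
      refine le_trans (add_le_add_left h1 _) (le_of_eq ?_)
      rw [hEc]
      have hainv : a⁻¹ = abar * P₁ / c := by rw [ha, inv_div]
      have hdiff : Δ⁻¹ - c⁻¹ = (c - Δ) / (c * Δ) := by
        rw [inv_eq_one_div, inv_eq_one_div, div_sub_div _ _ (ne_of_gt hΔ0) (ne_of_gt hc),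
          one_mul, mul_one, mul_comm Δ c]
      rw [hainv, hdiff]
      ring
    calc ∫ t in Icc (0:ℝ) c, phi a t * S (γ / (1 + c - t)) ≤ ∫ t in Icc (0:ℝ) c, G t := hup
      _ = _ := hsplit
      _ ≤ _ := hfinal
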